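/- arXiv:2108.01746 — 4 statements merged into one kernel-verified Lean document; each statement's English description precedes it below -/
import Mathlib

section
/- Let T > 0, let p ∈ [0,1), and let u, v, w : [0,T] → ℝ be nonnegative measurable functions such that v, w, v·u and w·u^p are integrable on [0,T]. If u(t) ≤ ∫₀ᵗ v(s)·u(s) ds + ∫₀ᵗ w(s)·u(s)^p ds for all t ∈ [0,T], then, setting q := 1 − p, one has u(t)·exp(−∫₀ᵗ v(s) ds) ≤ ( q·∫₀ᵗ w(s)·exp(−q·∫₀ˢ v(r) dr) ds )^{1/q} for all t ∈ [0,T]. -/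
/-!
Let `a` be the right-hand side of the hypothesis, `V = ∫ v`, and `q = 1 - p`. Then
`z = a e^{-V}` is absolutely continuous and, since `u ≤ a`, a.e.
`z' = (v u + w u^p - v a) e^{-V} ≤ w a^p e^{-V} = w e^{-qV} z^p`.
The Bernoulli substitution `z ↦ z^q` linearises this to `(z^q)' ≤ q w e^{-qV}`; integrating
from `z 0 = 0` gives the bound. Since `z` may vanish, one works with `(z + ε)^q` and lets `ε → 0`.
-/

open MeasureTheory Set Filter Real
open scoped NNReal Topology

theorem LipschitzOnWith.comp_absolutelyContinuousOnInterval {X Y : Type*} [PseudoMetricSpace X]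
    [PseudoMetricSpace Y] {g : X → Y} {K : ℝ≥0} {s : Set X} {f : ℝ → X} {a b : ℝ}
    (hg : LipschitzOnWith K g s) (hf : AbsolutelyContinuousOnInterval f a b)
    (hfs : MapsTo f (uIcc a b) s) : AbsolutelyContinuousOnInterval (g ∘ f) a b := by
  unfold AbsolutelyContinuousOnInterval at hf ⊢
  refine squeeze_zero' (.of_forall fun _ ↦ Finset.sum_nonneg fun _ _ ↦ dist_nonneg) ?_
    (by simpa using hf.const_mul (K : ℝ))
  rw [eventually_inf_principal]
  filter_upwards with ⟨n, I⟩ hnI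
  rw [Finset.mul_sum]
  gcongr with i hi
  exact hg.dist_le_mul _ (hfs (hnI.1 i hi).1) _ (hfs (hnI.1 i hi).2)

theorem ContDiffOn.comp_absolutelyContinuousOnInterval {g f : ℝ → ℝ} {s : Set ℝ} {a b : ℝ}
    (hg : ContDiffOn ℝ 1 g s) (hf : AbsolutelyContinuousOnInterval f a b)
    (hfs : MapsTo f (uIcc a b) s) : AbsolutelyContinuousOnInterval (g ∘ f) a b := by
  have hconn : IsPreconnected (f '' uIcc a b) := isPreconnected_uIcc.image f hf.continuousOn
  obtain ⟨K, hK⟩ := (hg.mono hfs.image_subset).exists_lipschitzOnWith one_ne_zero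
    hconn.ordConnected.convex (isCompact_uIcc.image_of_continuousOn hf.continuousOn)
  exact hK.comp_absolutelyContinuousOnInterval hf (mapsTo_image f _)

section Bernoulli

variable {y W : ℝ → ℝ} {p a b : ℝ}

theorem deriv_add_const_rpow_le {x ε : ℝ} (hp0 : 0 ≤ p) (hp1 : p < 1) (hε : 0 < ε)
    (hy : 0 ≤ y x) (hdy : DifferentiableAt ℝ y x) (hW : 0 ≤ W x)
    (hderiv : deriv y x ≤ W x * y x ^ p) :
    deriv (fun s ↦ (y s + ε) ^ (1 - p)) x ≤ (1 - p) * W x := by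
  have hpos : 0 < y x + ε := by linarith
  rw [((hdy.hasDerivAt.add_const ε).rpow_const (.inl hpos.ne')).deriv]
  have hpow : y x ^ p * (y x + ε) ^ (1 - p - 1) ≤ 1 := by
    rw [show 1 - p - 1 = -p by ring, rpow_neg hpos.le, ← div_eq_mul_inv]
    exact div_le_one_of_le₀ (rpow_le_rpow hy (by linarith) hp0) (by positivity)
  calc deriv y x * (1 - p) * (y x + ε) ^ (1 - p - 1)
      ≤ W x * y x ^ p * (1 - p) * (y x + ε) ^ (1 - p - 1) := by gcongr
    _ = (1 - p) * W x * (y x ^ p * (y x + ε) ^ (1 - p - 1)) := by ring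
    _ ≤ (1 - p) * W x := mul_le_of_le_one_right (by nlinarith) hpow

variable (hp0 : 0 ≤ p) (hp1 : p < 1) (hab : a ≤ b) (hy : AbsolutelyContinuousOnInterval y a b)
  (hy0 : ∀ x ∈ Icc a b, 0 ≤ y x) (hW : IntervalIntegrable W volume a b)
  (hW0 : ∀ x ∈ Icc a b, 0 ≤ W x) (hderiv : ∀ᵐ x, x ∈ Icc a b → deriv y x ≤ W x * y x ^ p)
include hp0 hp1 hab hy hy0 hW hW0 hderiv

theorem add_rpow_le_of_ae_deriv_le_mul_rpow {ε : ℝ} (hε : 0 < ε) :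
    (y b + ε) ^ (1 - p) ≤ (y a + ε) ^ (1 - p) + (1 - p) * ∫ x in a..b, W x := by
  have hG : AbsolutelyContinuousOnInterval (fun s ↦ (y s + ε) ^ (1 - p)) a b := by
    refine ContDiffOn.comp_absolutelyContinuousOnInterval (g := fun r ↦ (r + ε) ^ (1 - p))
      (s := Ici 0) (fun r hr ↦ ?_) hy fun x hx ↦ hy0 x (by rwa [uIcc_of_le hab] at hx)
    exact ((contDiffAt_rpow_const_of_ne (by simp only [id]; linarith [mem_Ici.mp hr])).comp r
      (contDiffAt_id.add contDiffAt_const)).contDiffWithinAt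
  have hdiff := hy.ae_differentiableAt
  rw [uIcc_of_le hab] at hdiff
  have hmono : ∫ x in a..b, deriv (fun s ↦ (y s + ε) ^ (1 - p)) x ≤ ∫ x in a..b, (1 - p) * W x := by
    refine intervalIntegral.integral_mono_ae_restrict hab hG.intervalIntegrable_deriv
      (hW.const_mul _) ?_
    rw [EventuallyLE, ae_restrict_iff' measurableSet_Icc]
    filter_upwards [hdiff, hderiv] with x hdx hdx' hx
    exact deriv_add_const_rpow_le hp0 hp1 hε (hy0 x hx) (hdx hx) (hW0 x hx) (hdx' hx)
  rw [hG.integral_deriv_eq_sub, intervalIntegral.integral_const_mul] at hmono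
  linarith

theorem le_rpow_one_div_of_ae_deriv_le_mul_rpow :
    y b ≤ (y a ^ (1 - p) + (1 - p) * ∫ x in a..b, W x) ^ (1 / (1 - p)) := by
  have hcont : ∀ c, Continuous fun ε : ℝ ↦ (c + ε) ^ (1 - p) := fun c ↦
    (continuous_const.add continuous_id).rpow_const fun _ ↦ .inr (by linarith)
  have hle : y b ^ (1 - p) ≤ y a ^ (1 - p) + (1 - p) * ∫ x in a..b, W x := by
    refine le_of_tendsto_of_tendsto (b := 𝓝[>] (0 : ℝ)) ?_ ?_ (eventually_nhdsWithin_of_forall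
      fun ε hε ↦ add_rpow_le_of_ae_deriv_le_mul_rpow hp0 hp1 hab hy hy0 hW hW0 hderiv hε)
    · simpa using ((hcont (y b)).tendsto 0).mono_left nhdsWithin_le_nhds
    · simpa using (((hcont (y a)).tendsto 0).add_const _).mono_left nhdsWithin_le_nhds
  have hyb := hy0 b (right_mem_Icc.2 hab)
  rwa [one_div, le_rpow_inv_iff_of_pos hyb ((rpow_nonneg hyb _).trans hle) (by linarith)]

end Bernoulli

theorem ae_deriv_mul_exp_neg_le {A V u v w : ℝ → ℝ} {p : ℝ} {s : Set ℝ} (hp : 0 ≤ p)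
    (hA : ∀ᵐ x, x ∈ s → HasDerivAt A (v x * u x + w x * u x ^ p) x)
    (hV : ∀ᵐ x, x ∈ s → HasDerivAt V (v x) x) (hu : ∀ x ∈ s, 0 ≤ u x)
    (huA : ∀ x ∈ s, u x ≤ A x) (hv : ∀ x ∈ s, 0 ≤ v x) (hw : ∀ x ∈ s, 0 ≤ w x) :
    ∀ᵐ x, x ∈ s → deriv (fun t ↦ A t * exp (-V t)) x
      ≤ w x * exp (-(1 - p) * V x) * (A x * exp (-V x)) ^ p := by
  filter_upwards [hA, hV] with x hAx hVx hx
  have hexp : exp (-(1 - p) * V x) * exp (-V x) ^ p = exp (-V x) := by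
    rw [← exp_mul, ← exp_add]; ring_nf
  rw [((hAx hx).fun_mul (hVx hx).fun_neg.exp).deriv, mul_rpow ((hu x hx).trans (huA x hx))
    (exp_pos _).le]
  calc (v x * u x + w x * u x ^ p) * exp (-V x) + A x * (exp (-V x) * -v x)
      = (w x * u x ^ p - v x * (A x - u x)) * exp (-V x) := by ring
    _ ≤ w x * A x ^ p * exp (-V x) := by
      gcongr
      linarith [mul_nonneg (hv x hx) (sub_nonneg.mpr (huA x hx)),
        mul_le_mul_of_nonneg_left (rpow_le_rpow (hu x hx) (huA x hx) hp) (hw x hx)]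
    _ = w x * A x ^ p * (exp (-(1 - p) * V x) * exp (-V x) ^ p) := by rw [hexp]
    _ = w x * exp (-(1 - p) * V x) * (A x ^ p * exp (-V x) ^ p) := by ring

theorem willett_wong_gronwall_general
    (T p : ℝ) (hp0 : 0 ≤ p) (hp1 : p < 1)
    (u v w : ℝ → ℝ)
    (hu_nonneg : ∀ t ∈ Set.Icc (0:ℝ) T, 0 ≤ u t)
    (hv_nonneg : ∀ t ∈ Set.Icc (0:ℝ) T, 0 ≤ v t)
    (hw_nonneg : ∀ t ∈ Set.Icc (0:ℝ) T, 0 ≤ w t)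
    (hv_int : IntegrableOn v (Set.Icc (0:ℝ) T))
    (hw_int : IntegrableOn w (Set.Icc (0:ℝ) T))
    (hvu_int : IntegrableOn (fun s => v s * u s) (Set.Icc (0:ℝ) T))
    (hwup_int : IntegrableOn (fun s => w s * u s ^ p) (Set.Icc (0:ℝ) T))
    (hmain : ∀ t ∈ Set.Icc (0:ℝ) T,
      u t ≤ (∫ s in (0:ℝ)..t, v s * u s) + ∫ s in (0:ℝ)..t, w s * u s ^ p) :
    ∀ t ∈ Set.Icc (0:ℝ) T,
      u t * Real.exp (-∫ s in (0:ℝ)..t, v s)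
        ≤ ((1 - p) * ∫ s in (0:ℝ)..t,
            w s * Real.exp (-(1 - p) * ∫ r in (0:ℝ)..s, v r)) ^ ((1:ℝ) / (1 - p)) := by
  intro t ht
  set V : ℝ → ℝ := fun s ↦ ∫ r in (0:ℝ)..s, v r
  set A : ℝ → ℝ := fun s ↦ ∫ r in (0:ℝ)..s, v r * u r + w r * u r ^ p
  have hint : ∀ s ∈ Icc 0 T, ∀ f : ℝ → ℝ, IntegrableOn f (Icc 0 T) →
      IntervalIntegrable f volume 0 s := fun s hs f hf ↦
    (hf.mono_set (uIcc_of_le hs.1 ▸ Icc_subset_Icc le_rfl hs.2)).intervalIntegrable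
  have hu_le_A : ∀ s ∈ Icc 0 T, u s ≤ A s := fun s hs ↦ by
    simpa only [A, intervalIntegral.integral_add (hint s hs _ hvu_int) (hint s hs _ hwup_int)]
      using hmain s hs
  have hTt : Icc 0 t ⊆ Icc 0 T := Icc_subset_Icc le_rfl ht.2
  have hvi := hint t ht _ hv_int
  have hfi := hint t ht _ (hvu_int.add hwup_int)
  have hV := hvi.absolutelyContinuousOnInterval_intervalIntegral left_mem_uIcc
  have hz : AbsolutelyContinuousOnInterval (fun s ↦ A s * exp (-V s)) 0 t :=
    (hfi.absolutelyContinuousOnInterval_intervalIntegral left_mem_uIcc).fun_mul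
      (contDiff_exp.contDiffOn.comp_absolutelyContinuousOnInterval hV.neg (mapsTo_univ _ _))
  have hW : IntervalIntegrable (fun s ↦ w s * exp (-(1 - p) * V s)) volume 0 t :=
    hint t ht _ hw_int |>.mul_continuousOn (by have := hV.continuousOn; fun_prop)
  have hderiv := ae_deriv_mul_exp_neg_le (s := Icc 0 t) hp0
    (by filter_upwards [hfi.ae_hasDerivAt_integral] with x hx hxt
        exact hx (uIcc_of_le ht.1 ▸ hxt) 0 left_mem_uIcc)
    (by filter_upwards [hvi.ae_hasDerivAt_integral] with x hx hxt
        exact hx (uIcc_of_le ht.1 ▸ hxt) 0 left_mem_uIcc)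
    (fun x hx ↦ hu_nonneg x (hTt hx)) (fun x hx ↦ hu_le_A x (hTt hx))
    (fun x hx ↦ hv_nonneg x (hTt hx)) (fun x hx ↦ hw_nonneg x (hTt hx))
  have hbound := le_rpow_one_div_of_ae_deriv_le_mul_rpow hp0 hp1 ht.1 hz
    (fun s hs ↦ mul_nonneg ((hu_nonneg s (hTt hs)).trans (hu_le_A s (hTt hs))) (exp_pos _).le)
    hW (fun s hs ↦ mul_nonneg (hw_nonneg s (hTt hs)) (exp_pos _).le) hderiv
  rw [show A 0 = 0 from intervalIntegral.integral_same, zero_mul, zero_rpow (by linarith),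
    zero_add] at hbound
  exact (mul_le_mul_of_nonneg_right (hu_le_A t ht) (exp_pos _).le).trans hbound

/-- Willett–Wong version of Gronwall's inequality. -/
theorem willett_wong_gronwall
    (T p : ℝ) (hT : 0 < T) (hp0 : 0 ≤ p) (hp1 : p < 1)
    (u v w : ℝ → ℝ)
    (hu_meas : Measurable u) (hv_meas : Measurable v) (hw_meas : Measurable w)
    (hu_nonneg : ∀ t ∈ Set.Icc (0:ℝ) T, 0 ≤ u t)
    (hv_nonneg : ∀ t ∈ Set.Icc (0:ℝ) T, 0 ≤ v t)
    (hw_nonneg : ∀ t ∈ Set.Icc (0:ℝ) T, 0 ≤ w t)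
    (hv_int : IntegrableOn v (Set.Icc (0:ℝ) T))
    (hw_int : IntegrableOn w (Set.Icc (0:ℝ) T))
    (hvu_int : IntegrableOn (fun s => v s * u s) (Set.Icc (0:ℝ) T))
    (hwup_int : IntegrableOn (fun s => w s * u s ^ p) (Set.Icc (0:ℝ) T))
    (hmain : ∀ t ∈ Set.Icc (0:ℝ) T,
      u t ≤ (∫ s in (0:ℝ)..t, v s * u s) + ∫ s in (0:ℝ)..t, w s * u s ^ p) :
    ∀ t ∈ Set.Icc (0:ℝ) T,
      u t * Real.exp (-∫ s in (0:ℝ)..t, v s)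
        ≤ ((1 - p) * ∫ s in (0:ℝ)..t,
            w s * Real.exp (-(1 - p) * ∫ r in (0:ℝ)..s, v r)) ^ ((1:ℝ) / (1 - p)) :=
  willett_wong_gronwall_general T p hp0 hp1 u v w hu_nonneg hv_nonneg hw_nonneg hv_int hw_int
    hvu_int hwup_int hmain
end

section
/- Let T > 0, θ ∈ (0,1), C ≥ 0, and let u : [0,T] → ℝ be a nonnegative integrable function such that u(t) ≤ C·(∫₀ᵗ u(s) ds)^θ for all t ∈ [0,T]. Then u(t) ≤ C^{1/(1−θ)}·((1−θ)·t)^{θ/(1−θ)} for all t ∈ [0,T]. -/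
open MeasureTheory Set

/-!
Write `U t = ∫₀ᵗ u` and `α = 1 / (1 - θ)`. Since `U` is nondecreasing, `U t ≤ t · C · (U t)^θ`,
so `U t ≤ (C t)^α` and `M = sup_{t ≤ T} U t / t^α` is finite. Integrating
`u ≤ C U^θ ≤ C M^θ t^(α θ)` gives `U t ≤ C (1 - θ) M^θ t^α`, hence `M ≤ C (1 - θ) M^θ`, that is
`M ≤ (C (1 - θ))^α`. Feeding `U t ≤ (C (1 - θ) t)^α` back into `u ≤ C U^θ` gives the bound.
-/

theorem le_rpow_one_div_one_sub_of_le_mul_rpow {x K θ : ℝ} (hx : 0 ≤ x) (hK : 0 ≤ K)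
    (hθ : θ < 1) (h : x ≤ K * x ^ θ) : x ≤ K ^ (1 / (1 - θ)) := by
  rcases hx.eq_or_lt with rfl | hx
  · exact Real.rpow_nonneg hK _
  have h1θ : 0 < 1 - θ := sub_pos.2 hθ
  have hxθ : 0 < x ^ θ := Real.rpow_pos_of_pos hx θ
  have key : x ^ (1 - θ) ≤ K := by
    rwa [Real.rpow_sub hx, Real.rpow_one, div_le_iff₀ hxθ]
  calc x = (x ^ (1 - θ)) ^ (1 / (1 - θ)) := by
        rw [← Real.rpow_mul hx.le, mul_one_div_cancel h1θ.ne', Real.rpow_one]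
    _ ≤ K ^ (1 / (1 - θ)) := Real.rpow_le_rpow (by positivity) key (by positivity)

theorem integral_rpow_div_one_sub {θ : ℝ} (hθ : θ < 1) (s : ℝ) :
    ∫ x in (0:ℝ)..s, x ^ (θ / (1 - θ)) = (1 - θ) * s ^ (1 / (1 - θ)) := by
  have h1θ : 0 < 1 - θ := sub_pos.2 hθ
  have hexp : θ / (1 - θ) + 1 = 1 / (1 - θ) := by field_simp; ring
  rw [integral_rpow (Or.inl (by rw [lt_div_iff₀ h1θ]; linarith)), hexp,
    Real.zero_rpow (by positivity), sub_zero]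
  field_simp

structure GronwallSubsolution (T θ C : ℝ) (u : ℝ → ℝ) : Prop where
  nonneg : ∀ t ∈ Icc 0 T, 0 ≤ u t
  integrableOn : IntegrableOn u (Icc 0 T)
  le_mul_integral_rpow : ∀ t ∈ Icc 0 T, u t ≤ C * (∫ s in (0:ℝ)..t, u s) ^ θ

namespace GronwallSubsolution

variable {T θ C : ℝ} {u : ℝ → ℝ} {t : ℝ}

theorem intervalIntegrable (hu : GronwallSubsolution T θ C u) (ht : t ∈ Icc 0 T) :
    IntervalIntegrable u volume 0 t :=
  (intervalIntegrable_iff_integrableOn_Icc_of_le ht.1).2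
    (hu.integrableOn.mono_set (Icc_subset_Icc_right ht.2))

theorem integral_nonneg (hu : GronwallSubsolution T θ C u) (ht : t ∈ Icc 0 T) :
    0 ≤ ∫ s in (0:ℝ)..t, u s :=
  intervalIntegral.integral_nonneg ht.1 fun s hs => hu.nonneg s ⟨hs.1, hs.2.trans ht.2⟩

theorem integral_mono (hu : GronwallSubsolution T θ C u) {x : ℝ} (hx : 0 ≤ x) (hxt : x ≤ t)
    (ht : t ≤ T) : ∫ s in (0:ℝ)..x, u s ≤ ∫ s in (0:ℝ)..t, u s := by
  refine intervalIntegral.integral_mono_interval le_rfl hx hxt ?_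
    (hu.intervalIntegrable ⟨hx.trans hxt, ht⟩)
  filter_upwards [ae_restrict_mem measurableSet_Ioc] with s hs
  exact hu.nonneg s ⟨hs.1.le, hs.2.trans ht⟩

theorem integral_le_integral (hu : GronwallSubsolution T θ C u) (ht : t ∈ Icc 0 T)
    {f : ℝ → ℝ} (hf : IntervalIntegrable f volume 0 t)
    (hbound : ∀ x ∈ Icc 0 t, C * (∫ s in (0:ℝ)..x, u s) ^ θ ≤ f x) :
    ∫ s in (0:ℝ)..t, u s ≤ ∫ x in (0:ℝ)..t, f x :=
  intervalIntegral.integral_mono_on ht.1 (hu.intervalIntegrable ht) hf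
    fun x hx => (hu.le_mul_integral_rpow x ⟨hx.1, hx.2.trans ht.2⟩).trans (hbound x hx)

theorem integral_le_rpow_mul (hu : GronwallSubsolution T θ C u) (hθ0 : 0 ≤ θ) (hθ1 : θ < 1)
    (hC : 0 ≤ C) (ht : t ∈ Icc 0 T) :
    ∫ s in (0:ℝ)..t, u s ≤ (C * t) ^ (1 / (1 - θ)) := by
  have hU : ∫ s in (0:ℝ)..t, u s ≤ ∫ _ in (0:ℝ)..t, C * (∫ s in (0:ℝ)..t, u s) ^ θ := by
    refine hu.integral_le_integral ht intervalIntegrable_const fun x hx => ?_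
    gcongr
    · exact hu.integral_nonneg ⟨hx.1, hx.2.trans ht.2⟩
    · exact hu.integral_mono hx.1 hx.2 ht.2
  rw [intervalIntegral.integral_const, smul_eq_mul, sub_zero, mul_left_comm, ← mul_assoc] at hU
  exact le_rpow_one_div_one_sub_of_le_mul_rpow (hu.integral_nonneg ht) (mul_nonneg hC ht.1)
    hθ1 hU

theorem integral_le_mul_rpow_of_forall_integral_le (hu : GronwallSubsolution T θ C u)
    (hθ0 : 0 ≤ θ) (hθ1 : θ < 1) (hC : 0 ≤ C) {A : ℝ} (hA : 0 ≤ A)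
    (hbound : ∀ s ∈ Icc 0 T, ∫ x in (0:ℝ)..s, u x ≤ A * s ^ (1 / (1 - θ)))
    (ht : t ∈ Icc 0 T) :
    ∫ s in (0:ℝ)..t, u s ≤ C * (1 - θ) * A ^ θ * t ^ (1 / (1 - θ)) := by
  have hf : IntervalIntegrable (fun x => C * A ^ θ * x ^ (θ / (1 - θ))) volume 0 t :=
    (intervalIntegral.intervalIntegrable_rpow'
      (by rw [lt_div_iff₀ (sub_pos.2 hθ1)]; linarith)).const_mul _
  calc ∫ s in (0:ℝ)..t, u s ≤ ∫ x in (0:ℝ)..t, C * A ^ θ * x ^ (θ / (1 - θ)) := by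
        refine hu.integral_le_integral ht hf fun x hx => ?_
        have hxT : x ∈ Icc 0 T := ⟨hx.1, hx.2.trans ht.2⟩
        calc C * (∫ s in (0:ℝ)..x, u s) ^ θ ≤ C * (A * x ^ (1 / (1 - θ))) ^ θ := by
              gcongr
              · exact hu.integral_nonneg hxT
              · exact hbound x hxT
          _ = C * A ^ θ * x ^ (θ / (1 - θ)) := by
              rw [Real.mul_rpow hA (by positivity [hx.1]), ← Real.rpow_mul hx.1,
                one_div_mul_eq_div, mul_assoc]
    _ = C * (1 - θ) * A ^ θ * t ^ (1 / (1 - θ)) := by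
        rw [intervalIntegral.integral_const_mul, integral_rpow_div_one_sub hθ1]
        ring

theorem integral_le_rpow_mul_one_sub (hu : GronwallSubsolution T θ C u) (hθ0 : 0 ≤ θ)
    (hθ1 : θ < 1) (hC : 0 ≤ C) (ht : t ∈ Icc 0 T) :
    ∫ s in (0:ℝ)..t, u s ≤ (C * (1 - θ) * t) ^ (1 / (1 - θ)) := by
  have h1θ : 0 < 1 - θ := sub_pos.2 hθ1
  -- at `s = 0` the ratio is the junk value `0 / 0 = 0`, which is harmless
  set ratios := (fun s => (∫ x in (0:ℝ)..s, u x) / s ^ (1 / (1 - θ))) '' Icc 0 T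
  set M := sSup ratios
  have hbdd : BddAbove ratios := by
    refine ⟨C ^ (1 / (1 - θ)), forall_mem_image.2 fun s hs => ?_⟩
    refine div_le_of_le_mul₀ (by positivity [hs.1]) (by positivity) ?_
    rw [← Real.mul_rpow hC hs.1]
    exact hu.integral_le_rpow_mul hθ0 hθ1 hC hs
  have hM : ∀ s ∈ Icc 0 T, ∫ x in (0:ℝ)..s, u x ≤ M * s ^ (1 / (1 - θ)) := by
    intro s hs
    rcases hs.1.eq_or_lt with rfl | hs0
    · rw [intervalIntegral.integral_same, Real.zero_rpow (by positivity), mul_zero]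
    rw [← div_le_iff₀ (by positivity)]
    exact le_csSup hbdd (mem_image_of_mem _ hs)
  have hM0 : 0 ≤ M := le_csSup_of_le hbdd (mem_image_of_mem _ ht)
    (div_nonneg (hu.integral_nonneg ht) (by positivity [ht.1]))
  have hMfix : M ≤ C * (1 - θ) * M ^ θ :=
    csSup_le ((nonempty_Icc.2 (ht.1.trans ht.2)).image _) <| forall_mem_image.2 fun s hs =>
      div_le_of_le_mul₀ (by positivity [hs.1]) (by positivity) <|
        hu.integral_le_mul_rpow_of_forall_integral_le hθ0 hθ1 hC hM0 hM hs
  have hMle := le_rpow_one_div_one_sub_of_le_mul_rpow hM0 (by positivity) hθ1 hMfix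
  calc ∫ s in (0:ℝ)..t, u s ≤ M * t ^ (1 / (1 - θ)) := hM t ht
    _ ≤ (C * (1 - θ)) ^ (1 / (1 - θ)) * t ^ (1 / (1 - θ)) := by
        gcongr
        positivity [ht.1]
    _ = (C * (1 - θ) * t) ^ (1 / (1 - θ)) := (Real.mul_rpow (by positivity) ht.1).symm

end GronwallSubsolution

theorem nonlinear_gronwall_general
    (T θ C : ℝ) (hθ0 : 0 < θ) (hθ1 : θ < 1) (hC : 0 ≤ C)
    (u : ℝ → ℝ)
    (hu_nonneg : ∀ t ∈ Set.Icc (0:ℝ) T, 0 ≤ u t)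
    (hu_int : IntegrableOn u (Set.Icc (0:ℝ) T))
    (h : ∀ t ∈ Set.Icc (0:ℝ) T, u t ≤ C * (∫ s in (0:ℝ)..t, u s) ^ θ) :
    ∀ t ∈ Set.Icc (0:ℝ) T,
      u t ≤ C ^ ((1:ℝ) / (1 - θ)) * ((1 - θ) * t) ^ (θ / (1 - θ)) := by
  have hu : GronwallSubsolution T θ C u := ⟨hu_nonneg, hu_int, h⟩
  intro t ht
  have h1θ : 0 < 1 - θ := sub_pos.2 hθ1
  calc u t ≤ C * (∫ s in (0:ℝ)..t, u s) ^ θ := h t ht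
    _ ≤ C * ((C * (1 - θ) * t) ^ (1 / (1 - θ))) ^ θ := by
        gcongr
        · exact hu.integral_nonneg ht
        · exact hu.integral_le_rpow_mul_one_sub hθ0.le hθ1 hC ht
    _ = C ^ ((1:ℝ) / (1 - θ)) * ((1 - θ) * t) ^ (θ / (1 - θ)) := by
        rw [← Real.rpow_mul (by positivity [ht.1]), one_div_mul_eq_div, mul_assoc,
          Real.mul_rpow hC (by positivity [ht.1]), ← mul_assoc,
          ← Real.rpow_one_add' hC (by positivity), one_add_div h1θ.ne', sub_add_cancel]

/-- Nonlinear Gronwall inequality used for pathwise uniqueness. -/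
theorem nonlinear_gronwall
    (T θ C : ℝ) (hT : 0 < T) (hθ0 : 0 < θ) (hθ1 : θ < 1) (hC : 0 ≤ C)
    (u : ℝ → ℝ)
    (hu_nonneg : ∀ t ∈ Set.Icc (0:ℝ) T, 0 ≤ u t)
    (hu_int : IntegrableOn u (Set.Icc (0:ℝ) T))
    (h : ∀ t ∈ Set.Icc (0:ℝ) T, u t ≤ C * (∫ s in (0:ℝ)..t, u s) ^ θ) :
    ∀ t ∈ Set.Icc (0:ℝ) T,
      u t ≤ C ^ ((1:ℝ) / (1 - θ)) * ((1 - θ) * t) ^ (θ / (1 - θ)) :=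
  nonlinear_gronwall_general T θ C hθ0 hθ1 hC u hu_nonneg hu_int h
end

section
/- For every r ∈ (0,1), the products ∏_{k=2}^{n−1} ( 1/(1 − r^k) )^{ r^{n−k} } converge to 1 as n → ∞. -/
/-!
Each factor is at least `1`, and since `1 / (1 - x) = 1 + x / (1 - x) ≤ exp (x / (1 - x))`, the
`k`-th factor is at most `exp (r ^ k / (1 - r ^ k) * r ^ (n - k)) ≤ exp (r ^ n / (1 - r))`.
So the product lies between `1` and `exp (n * r ^ n / (1 - r))`, and `n * r ^ n → 0`.
-/

open Filter Real

lemma one_le_one_div_one_sub_rpow {x t : ℝ} (hx0 : 0 ≤ x) (hx1 : x < 1) (ht : 0 ≤ t) :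
    1 ≤ (1 / (1 - x)) ^ t :=
  one_le_rpow (by rw [le_div_iff₀ (by linarith)]; linarith) ht

lemma one_div_one_sub_rpow_le_exp {x t : ℝ} (hx1 : x < 1) (ht : 0 ≤ t) :
    (1 / (1 - x)) ^ t ≤ exp (x / (1 - x) * t) := by
  have hbase : 1 / (1 - x) = x / (1 - x) + 1 := by
    field_simp [(sub_pos.2 hx1).ne']
    ring
  rw [exp_mul]
  exact rpow_le_rpow (one_div_pos.2 (sub_pos.2 hx1)).le (hbase ▸ add_one_le_exp _) ht

lemma pow_div_one_sub_pow_mul_pow_sub_le {r : ℝ} (hr0 : 0 ≤ r) (hr1 : r < 1) {k n : ℕ}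
    (hk : k ≠ 0) (hkn : k ≤ n) :
    r ^ k / (1 - r ^ k) * r ^ (n - k) ≤ r ^ n / (1 - r) := by
  rw [div_mul_eq_mul_div, ← pow_add, Nat.add_sub_cancel' hkn]
  have hrk : r ^ k ≤ r := pow_le_of_le_one hr0 hr1.le hk
  gcongr

lemma one_le_prod_one_div_one_sub_pow_rpow {r : ℝ} (hr0 : 0 ≤ r) (hr1 : r < 1) (n : ℕ) :
    1 ≤ ∏ k ∈ Finset.Ico 2 n, (1 / (1 - r ^ k)) ^ ((r ^ (n - k) : ℝ)) :=
  Finset.one_le_prod fun k hk =>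
    one_le_one_div_one_sub_rpow (pow_nonneg hr0 k) (pow_lt_one₀ hr0 hr1 (by grind))
      (pow_nonneg hr0 _)

lemma prod_one_div_one_sub_pow_rpow_le_exp {r : ℝ} (hr0 : 0 ≤ r) (hr1 : r < 1) (n : ℕ) :
    ∏ k ∈ Finset.Ico 2 n, (1 / (1 - r ^ k)) ^ ((r ^ (n - k) : ℝ)) ≤
      exp (n * r ^ n / (1 - r)) := by
  have hfactor : ∀ k ∈ Finset.Ico 2 n,
      (1 / (1 - r ^ k)) ^ ((r ^ (n - k) : ℝ)) ≤ exp (r ^ n / (1 - r)) := fun k hk => by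
    obtain ⟨h2k, hkn⟩ := Finset.mem_Ico.1 hk
    exact (one_div_one_sub_rpow_le_exp (pow_lt_one₀ hr0 hr1 (by omega)) (pow_nonneg hr0 _)).trans
      (exp_le_exp.2 (pow_div_one_sub_pow_mul_pow_sub_le hr0 hr1 (by omega) hkn.le))
  calc ∏ k ∈ Finset.Ico 2 n, (1 / (1 - r ^ k)) ^ ((r ^ (n - k) : ℝ))
      ≤ ∏ _k ∈ Finset.Ico 2 n, exp (r ^ n / (1 - r)) :=
        Finset.prod_le_prod
          (fun k _ => rpow_nonneg (one_div_nonneg.2 (sub_nonneg.2 (pow_le_one₀ hr0 hr1.le))) _)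
          hfactor
    _ = exp (r ^ n / (1 - r)) ^ (n - 2) := by rw [Finset.prod_const, Nat.card_Ico]
    _ ≤ exp (r ^ n / (1 - r)) ^ n :=
        pow_le_pow_right₀ (one_le_exp (by have := sub_pos.2 hr1; positivity)) (Nat.sub_le n 2)
    _ = exp (n * r ^ n / (1 - r)) := by rw [← exp_nat_mul, mul_div_assoc]

/-- The products `∏_{k=2}^{n-1} (1/(1 - r^k))^{r^{n-k}}` converge to `1` as `n → ∞`,
for every `r ∈ (0,1)`. -/
theorem prod_rpow_tendsto_one
    (r : ℝ) (hr0 : 0 < r) (hr1 : r < 1) :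
    Tendsto (fun n : ℕ =>
        ∏ k ∈ Finset.Ico 2 n, ((1 / (1 - r ^ k)) ^ ((r ^ (n - k) : ℝ)) : ℝ))
      atTop (nhds 1) := by
  have hexponent := (tendsto_self_mul_const_pow_of_lt_one hr0.le hr1).div_const (1 - r)
  rw [zero_div] at hexponent
  have hexp : Tendsto (fun n : ℕ => exp (n * r ^ n / (1 - r))) atTop (nhds 1) :=
    tendsto_exp_nhds_zero_nhds_one.comp hexponent
  exact tendsto_of_tendsto_of_tendsto_of_le_of_le tendsto_const_nhds hexp
    (one_le_prod_one_div_one_sub_pow_rpow hr0.le hr1)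
    (prod_one_div_one_sub_pow_rpow_le_exp hr0.le hr1)
end

section
/- For every r ∈ (0,1), the sums ∑_{k=2}^{n−1} r^{n−k} · log( 1/(1 − r^k) ) converge to 0 as n → ∞. -/
open Filter

/-! Since `log (1/(1 - x)) ≤ x/(1 - x)`, every term `r^{n-k} log (1/(1 - r^k))` with `1 ≤ k ≤ n` is
at most `r^{n-k} r^k/(1 - r) = r^n/(1 - r)`. The `n`-th sum is therefore squeezed between `0` and
`n r^n/(1 - r)`, which tends to `0`. -/

namespace Real

lemma log_one_div_one_sub_nonneg {x : ℝ} (hx0 : 0 ≤ x) (hx1 : x < 1) :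
    0 ≤ log (1 / (1 - x)) :=
  log_nonneg <| by rw [le_div_iff₀ (by linarith)]; linarith

lemma log_one_div_one_sub_le {x : ℝ} (hx : x < 1) : log (1 / (1 - x)) ≤ x / (1 - x) := by
  have hpos : 0 < 1 - x := by linarith
  calc log (1 / (1 - x)) ≤ 1 / (1 - x) - 1 := log_le_sub_one_of_pos (by positivity)
    _ = x / (1 - x) := by field_simp; ring

lemma log_one_div_one_sub_pow_le {r : ℝ} (hr0 : 0 ≤ r) (hr1 : r < 1) {k : ℕ} (hk : k ≠ 0) :
    log (1 / (1 - r ^ k)) ≤ r ^ k / (1 - r) := by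
  have hrk : r ^ k ≤ r := pow_le_of_le_one hr0 hr1.le hk
  calc log (1 / (1 - r ^ k)) ≤ r ^ k / (1 - r ^ k) := log_one_div_one_sub_le (by linarith)
    _ ≤ r ^ k / (1 - r) := by gcongr

lemma pow_sub_mul_log_one_div_one_sub_pow_le {r : ℝ} (hr0 : 0 ≤ r) (hr1 : r < 1) {k n : ℕ}
    (hk : k ≠ 0) (hkn : k ≤ n) :
    r ^ (n - k) * log (1 / (1 - r ^ k)) ≤ r ^ n / (1 - r) :=
  calc r ^ (n - k) * log (1 / (1 - r ^ k)) ≤ r ^ (n - k) * (r ^ k / (1 - r)) := by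
        gcongr; exact log_one_div_one_sub_pow_le hr0 hr1 hk
    _ = r ^ n / (1 - r) := by rw [← mul_div_assoc, pow_sub_mul_pow r hkn]

end Real

/-- The sums `∑_{k=2}^{n-1} r^{n-k} log(1/(1 - r^k))` converge to `0` as `n → ∞`,
for every `r ∈ (0,1)`. -/
theorem sum_log_tendsto_zero
    (r : ℝ) (hr0 : 0 < r) (hr1 : r < 1) :
    Tendsto (fun n : ℕ =>
        ∑ k ∈ Finset.Ico 2 n, r ^ (n - k) * Real.log (1 / (1 - r ^ k)))
      atTop (nhds 0) := by
  have hbound : Tendsto (fun n : ℕ => n * r ^ n / (1 - r)) atTop (nhds 0) := by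
    simpa using (tendsto_self_mul_const_pow_of_lt_one hr0.le hr1).div_const (1 - r)
  refine squeeze_zero (fun n => Finset.sum_nonneg fun k hk => ?_) (fun n => ?_) hbound
  · rw [Finset.mem_Ico] at hk
    have := Real.log_one_div_one_sub_nonneg (pow_nonneg hr0.le k)
      (pow_lt_one₀ hr0.le hr1 (by omega : k ≠ 0))
    positivity
  calc ∑ k ∈ Finset.Ico 2 n, r ^ (n - k) * Real.log (1 / (1 - r ^ k))
      ≤ (Finset.Ico 2 n).card • (r ^ n / (1 - r)) :=
        Finset.sum_le_card_nsmul _ _ _ fun k hk => by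
          rw [Finset.mem_Ico] at hk
          exact Real.pow_sub_mul_log_one_div_one_sub_pow_le hr0.le hr1 (by omega) hk.2.le
    _ ≤ n * r ^ n / (1 - r) := by
        rw [nsmul_eq_mul, mul_div_assoc]
        have : 0 ≤ r ^ n / (1 - r) := div_nonneg (by positivity) (by linarith)
        gcongr
        simp
end
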